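/- arXiv:1909.03531 — 3 statements merged into one kernel-verified Lean document; each statement's English description precedes it below -/
import Mathlib

section
/- Let θ₁,…,θₙ and x₁,…,xₙ be commuting variables, and for 0 ≤ a ≤ n−1 with b = n−1−a, let D_{(a|b)}(x) be the n×n determinant whose first column is (θ₁,…,θₙ)ᵀ and whose remaining columns are (x_i^j) for j ranging over {0,1,…,n−1}∖{a}. Then applying the sum of partial derivatives ∑_{i=1}^n ∂/∂x_i to D_{(a|b)} yields (a+1)·D_{(a+1|b−1)} if 0 ≤ a < n−1, and 0 if a = n−1. -/
open MvPolynomial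

/-- The determinant `D_{(a|b)}`: first column is the inert variables `θ_i = X (inl i)`,
remaining columns are powers `x_i^j = X (inr i) ^ j` for `j ∈ {0,…,n-1} \ {a}`. -/
noncomputable def Dhook (n a : ℕ) : MvPolynomial (Fin n ⊕ Fin n) ℚ :=
  Matrix.det (Matrix.of fun i j : Fin n =>
    if (j : ℕ) = 0 then X (Sum.inl i)
    else X (Sum.inr i) ^ (if (j : ℕ) - 1 < a then (j : ℕ) - 1 else (j : ℕ)))

open Matrix Finset

lemma pderiv_finset_prod {σ : Type*} (v : σ) {ι : Type*} [DecidableEq ι] (s : Finset ι)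
    (f : ι → MvPolynomial σ ℚ) :
    pderiv v (∏ i ∈ s, f i) = ∑ j ∈ s, pderiv v (f j) * ∏ i ∈ s.erase j, f i := by
  classical
  induction s using Finset.induction_on with
  | empty => simp
  | @insert a s ha ih =>
      rw [Finset.prod_insert ha, pderiv_mul, ih, Finset.sum_insert ha, Finset.erase_insert ha,
        Finset.mul_sum]
      congr 1
      refine Finset.sum_congr rfl fun j hj => ?_
      rw [Finset.erase_insert_of_ne (by rintro rfl; exact ha hj),
        Finset.prod_insert (fun h => ha (Finset.mem_of_mem_erase h))]
      ring

lemma pderiv_det {σ : Type*} (v : σ) {m : ℕ}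
    (M : Matrix (Fin m) (Fin m) (MvPolynomial σ ℚ)) :
    pderiv v M.det = ∑ j, (M.updateCol j fun k => pderiv v (M k j)).det := by
  classical
  rw [Matrix.det_apply, map_sum]
  have key : ∀ σ' : Equiv.Perm (Fin m),
      pderiv v (Equiv.Perm.sign σ' • ∏ i, M (σ' i) i)
        = ∑ j, Equiv.Perm.sign σ' •
            (pderiv v (M (σ' j) j) * ∏ i ∈ Finset.univ.erase j, M (σ' i) i) := by
    intro σ'
    rw [Units.smul_def, map_zsmul, pderiv_finset_prod, Finset.smul_sum]
    exact Finset.sum_congr rfl fun j _ => by rw [Units.smul_def]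
  rw [Finset.sum_congr rfl fun σ' _ => key σ', Finset.sum_comm]
  refine Finset.sum_congr rfl fun j _ => ?_
  rw [Matrix.det_apply]
  refine Finset.sum_congr rfl fun σ' _ => ?_
  congr 1
  rw [← Finset.mul_prod_erase Finset.univ _ (Finset.mem_univ j)]
  congr 1
  · rw [Matrix.updateCol_apply, if_pos rfl]
  · refine Finset.prod_congr rfl fun i hi => ?_
    rw [Matrix.updateCol_apply, if_neg (Finset.ne_of_mem_erase hi)]

lemma det_updateCol_sum {R : Type*} [CommRing R] {m : ℕ}
    (M : Matrix (Fin m) (Fin m) R) (j : Fin m) {ι : Type*} (s : Finset ι)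
    (f : ι → Fin m → R) :
    (M.updateCol j fun k => ∑ i ∈ s, f i k).det
      = ∑ i ∈ s, (M.updateCol j (f i)).det := by
  classical
  induction s using Finset.induction_on with
  | empty =>
      simp only [Finset.sum_empty]
      exact Matrix.det_eq_zero_of_column_eq_zero j (fun k => by simp)
  | @insert a s ha ih =>
      simp only [Finset.sum_insert ha]
      have : (fun k => f a k + ∑ i ∈ s, f i k)
          = (f a + fun k => ∑ i ∈ s, f i k) := rfl
      rw [this, Matrix.det_updateCol_add, ih]

theorem stmt0 (n a : ℕ) (hn : 0 < n) (ha : a ≤ n - 1) :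
    (∑ i : Fin n, pderiv (Sum.inr i) (Dhook n a)) =
      if a < n - 1 then ((a + 1 : ℚ)) • Dhook n (a + 1) else 0 := by
  classical
  set M : Matrix (Fin n) (Fin n) (MvPolynomial (Fin n ⊕ Fin n) ℚ) :=
    Matrix.of (fun i j : Fin n =>
      if (j : ℕ) = 0 then X (Sum.inl i)
      else X (Sum.inr i) ^ (if (j : ℕ) - 1 < a then (j : ℕ) - 1 else (j : ℕ))) with hM
  have hD : Dhook n a = M.det := rfl
  set e : Fin n → ℕ :=
    fun j => if (j : ℕ) - 1 < a then (j : ℕ) - 1 else (j : ℕ) with he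
  have step1 : (∑ i : Fin n, pderiv (Sum.inr i) (Dhook n a))
      = ∑ j : Fin n,
          (M.updateCol j fun k => ∑ i : Fin n, pderiv (Sum.inr i) (M k j)).det := by
    rw [hD]
    simp only [pderiv_det]
    rw [Finset.sum_comm]
    exact Finset.sum_congr rfl fun j _ =>
      (det_updateCol_sum M j Finset.univ _).symm
  have hcol : ∀ j : Fin n, (j : ℕ) ≠ 0 →
      (fun k => ∑ i : Fin n, pderiv (Sum.inr i) (M k j))
        = ((e j : MvPolynomial (Fin n ⊕ Fin n) ℚ))
            • fun k => X (Sum.inr k) ^ (e j - 1) := by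
    intro j hj
    funext k
    have hterm : ∀ i : Fin n, pderiv (Sum.inr i) (M k j)
        = if i = k then (e j : MvPolynomial (Fin n ⊕ Fin n) ℚ)
            * X (Sum.inr k) ^ (e j - 1) else 0 := by
      intro i
      have : M k j = X (Sum.inr k) ^ (e j) := by
        simp only [hM, Matrix.of_apply, if_neg hj, he]
      rw [this, pderiv_pow]
      by_cases hik : i = k
      · subst hik
        rw [pderiv_X_self, if_pos rfl, mul_one]
      · rw [pderiv_X_of_ne (fun h => hik (Sum.inr_injective h).symm), if_neg hik, mul_zero]
    simp only [hterm, Pi.smul_apply, smul_eq_mul]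
    rw [Finset.sum_ite_eq' Finset.univ k
      (fun _ => (e j : MvPolynomial (Fin n ⊕ Fin n) ℚ) * X (Sum.inr k) ^ (e j - 1))]
    simp
  have hzero : ∀ j : Fin n, e j ≠ a + 1 →
      (M.updateCol j fun k => ∑ i : Fin n, pderiv (Sum.inr i) (M k j)).det = 0 := by
    intro j hne
    by_cases hj0 : (j : ℕ) = 0
    · refine Matrix.det_eq_zero_of_column_eq_zero j (fun k => ?_)
      rw [Matrix.updateCol_self]
      have : ∀ i : Fin n, pderiv (Sum.inr i) (M k j) = 0 := by
        intro i
        have : M k j = X (Sum.inl k) := by simp only [hM, Matrix.of_apply, if_pos hj0]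
        rw [this, pderiv_X_of_ne (by simp)]
      simp [this]
    · rw [hcol j hj0, Matrix.det_updateCol_smul]
      by_cases hE : e j = 0
      · rw [hE]; simp
      · have hjn : (j : ℕ) < n := j.isLt
        have hej : e j ≤ (j : ℕ) := by simp only [he]; split <;> omega
        have hbound : (if e j - 1 < a then e j else e j - 1) < n := by
          split <;> omega
        set j' : Fin n := ⟨if e j - 1 < a then e j else e j - 1, hbound⟩ with hj'
        have hj'ne : j' ≠ j := by
          have hejlt : e j = (j : ℕ) - 1 ∨ e j = (j : ℕ) := by
            simp only [he]; split <;> [left; right] <;> rfl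
          have hcase : (j : ℕ) - 1 < a → e j = (j : ℕ) - 1 := by
            intro h; simp only [he, if_pos h]
          have hcase2 : ¬ ((j : ℕ) - 1 < a) → e j = (j : ℕ) := by
            intro h; simp only [he, if_neg h]
          refine fun h => ?_
          have : (j' : ℕ) = (j : ℕ) := by rw [h]
          simp only [hj'] at this
          by_cases hlt : (j : ℕ) - 1 < a
          · have h1 := hcase hlt
            split at this <;> omega
          · have h1 := hcase2 hlt
            split at this <;> omega
        have hcoleq : (fun k => X (Sum.inr k) ^ (e j - 1) :
            Fin n → MvPolynomial (Fin n ⊕ Fin n) ℚ) = fun k => M k j' := by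
          funext k
          have hj'0 : (j' : ℕ) ≠ 0 := by
            simp only [hj']
            split <;> omega
          have hexp : (if (j' : ℕ) - 1 < a then (j' : ℕ) - 1 else (j' : ℕ)) = e j - 1 := by
            simp only [hj']
            by_cases hlt : e j - 1 < a
            · rw [if_pos hlt]
              rw [if_pos (by omega)]
            · rw [if_neg hlt]
              have : e j - 1 > a ∨ e j - 1 = a := by omega
              rcases this with h | h
              · rw [if_neg (by omega)]
              · exact absurd (by omega : e j = a + 1) hne
          simp only [hM, Matrix.of_apply, if_neg hj'0, hexp]
        rw [hcoleq, Matrix.det_updateCol_eq_zero hj'ne, mul_zero]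
  rw [step1]
  by_cases hlt : a < n - 1
  · rw [if_pos hlt]
    have hlt' : a + 1 < n := by omega
    set j₀ : Fin n := ⟨a + 1, hlt'⟩ with hj₀
    rw [Finset.sum_eq_single j₀]
    · have hj₀0 : (j₀ : ℕ) ≠ 0 := by simp [hj₀]
      have hE : e j₀ = a + 1 := by
        simp only [he, hj₀]
        rw [if_neg (by omega)]
      rw [hcol j₀ hj₀0, Matrix.det_updateCol_smul, hE]
      have hMeq : (M.updateCol j₀ fun k => X (Sum.inr k) ^ (a + 1 - 1))
          = Matrix.of (fun i j : Fin n =>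
              if (j : ℕ) = 0 then X (Sum.inl i)
              else X (Sum.inr i) ^ (if (j : ℕ) - 1 < a + 1 then (j : ℕ) - 1 else (j : ℕ))) := by
        ext k j
        rw [Matrix.updateCol_apply]
        by_cases hjj : j = j₀
        · subst hjj
          rw [if_pos rfl]
          simp only [Matrix.of_apply, hj₀]
          rw [if_neg (by omega), if_pos (by omega)]
        · rw [if_neg hjj]
          simp only [hM, Matrix.of_apply]
          by_cases hj0 : (j : ℕ) = 0
          · rw [if_pos hj0, if_pos hj0]
          · rw [if_neg hj0, if_neg hj0]
            have hjne : (j : ℕ) ≠ a + 1 := fun h => hjj (Fin.ext h)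
            congr 1
            by_cases h1 : (j : ℕ) - 1 < a
            · rw [if_pos h1, if_pos (by omega)]
            · rw [if_neg h1, if_neg (by omega)]
      rw [hMeq]
      rw [Dhook]
      rw [smul_eq_C_mul]
      congr 1
      simp only [map_add, MvPolynomial.C_1, map_natCast]
      push_cast
      ring
    · intro j _ hne
      refine hzero j (fun hE => hne ?_)
      have : (j : ℕ) = a + 1 := by
        simp only [he] at hE
        split at hE <;> omega
      exact Fin.ext this
    · intro h
      exact absurd (Finset.mem_univ j₀) h
  · rw [if_neg hlt]
    refine Finset.sum_eq_zero fun j _ => hzero j ?_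
    have hej : e j ≤ (j : ℕ) := by simp only [he]; split <;> omega
    have : (j : ℕ) < n := j.isLt
    omega
end

section
/- For a polynomial φ(x) ∈ ℚ[x₁,…,xₙ] with φ ≠ 0, the polynomial φ(∂x)φ(x) (apply the differential operator obtained by substituting ∂/∂x_i for x_i in φ, to φ itself) has constant term equal to a positive rational number; in fact, if φ is written in the monomial basis with coefficients c_m on monomial m = ∏ x_i^{m_i}, the constant term equals ∑_m c_m² · ∏_i (m_i!). In particular φ(∂x)φ(x) ≠ 0. -/
/-!
The coefficient of `x^d` in `∂ᵢ^k p` is `(dᵢ + k)!/dᵢ!` times the coefficient of `x^(d + k eᵢ)`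
in `p`. Applying this once for each variable, the constant term of `∂^m p` is `c_m ∏ᵢ mᵢ!`, so the
constant term of `φ(∂x)φ(x)` is `∑_m c_m² ∏ᵢ mᵢ!`, a sum of positive terms over the nonempty
support of `φ`.
-/

open MvPolynomial

/-- Apply the monomial differential operator `∂^m = ∏ᵢ (∂/∂xᵢ)^{mᵢ}` to `p`. -/
noncomputable def applyMono (n : ℕ) (m : Fin n →₀ ℕ) (p : MvPolynomial (Fin n) ℚ) :
    MvPolynomial (Fin n) ℚ :=
  (List.finRange n).foldr (fun i q => (⇑(pderiv i))^[m i] q) p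

/-- The operator `φ(∂x)` applied to `p`:  `∑_m c_m ∂^m p` where `φ = ∑_m c_m x^m`. -/
noncomputable def diffOp (n : ℕ) (φ p : MvPolynomial (Fin n) ℚ) : MvPolynomial (Fin n) ℚ :=
  ∑ m ∈ φ.support, φ.coeff m • applyMono n m p

namespace MvPolynomial

variable {R σ : Type*} [CommSemiring R]

theorem coeff_iterate_pderiv (i : σ) (k : ℕ) (d : σ →₀ ℕ) (p : MvPolynomial σ R) :
    coeff d ((⇑(pderiv i))^[k] p) =
      coeff (d + Finsupp.single i k) p * ((d i + k).descFactorial k : R) := by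
  induction k generalizing p with
  | zero => simp
  | succ k ih =>
    rw [Function.iterate_succ_apply, ih, coeff_pderiv, add_assoc, ← Finsupp.single_add,
      Finsupp.add_apply, Finsupp.single_eq_same, ← add_assoc (d i), Nat.succ_descFactorial_succ]
    push_cast
    ring

theorem coeff_foldr_iterate_pderiv [DecidableEq σ] (m : σ →₀ ℕ) {l : List σ} (hl : l.Nodup)
    (d : σ →₀ ℕ) (p : MvPolynomial σ R) :
    coeff d (l.foldr (fun i q => (⇑(pderiv i))^[m i] q) p) =
      coeff (d + ∑ i ∈ l.toFinset, Finsupp.single i (m i)) p *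
        ∏ i ∈ l.toFinset, ((d i + m i).descFactorial (m i) : R) := by
  induction l generalizing d with
  | nil => simp
  | cons i l ih =>
    obtain ⟨hi, hl⟩ := List.nodup_cons.mp hl
    replace hi : i ∉ l.toFinset := List.mem_toFinset.not.mpr hi
    have hprod : ∏ j ∈ l.toFinset, (((d + Finsupp.single i (m i)) j + m j).descFactorial (m j) : R)
        = ∏ j ∈ l.toFinset, ((d j + m j).descFactorial (m j) : R) :=
      Finset.prod_congr rfl fun j hj => by
        rw [Finsupp.add_apply, Finsupp.single_eq_of_ne (ne_of_mem_of_not_mem hj hi), add_zero]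
    rw [List.foldr_cons, coeff_iterate_pderiv, ih hl, hprod, List.toFinset_cons,
      Finset.sum_insert hi, Finset.prod_insert hi, add_assoc]
    ring

end MvPolynomial

theorem coeff_zero_applyMono (n : ℕ) (m : Fin n →₀ ℕ) (p : MvPolynomial (Fin n) ℚ) :
    coeff 0 (applyMono n m p) = coeff m p * ∏ i : Fin n, ((m i).factorial : ℚ) := by
  rw [applyMono, coeff_foldr_iterate_pderiv m (List.nodup_finRange n), List.toFinset_finRange,
    Finsupp.univ_sum_single, zero_add]
  simp only [Finsupp.coe_zero, Pi.zero_apply, zero_add, Nat.descFactorial_self]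

theorem coeff_zero_diffOp_self (n : ℕ) (φ : MvPolynomial (Fin n) ℚ) :
    coeff 0 (diffOp n φ φ) =
      ∑ m ∈ φ.support, coeff m φ ^ 2 * ∏ i : Fin n, ((m i).factorial : ℚ) := by
  rw [diffOp, coeff_sum]
  refine Finset.sum_congr rfl fun m _ => ?_
  rw [coeff_smul, coeff_zero_applyMono, smul_eq_mul]
  ring

/-- The constant term of `φ(∂x)φ(x)` equals `∑_m c_m² ∏ᵢ (mᵢ)!`, which is positive
whenever `φ ≠ 0`; in particular `φ(∂x)φ(x) ≠ 0`. -/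
theorem stmt4 (n : ℕ) (φ : MvPolynomial (Fin n) ℚ) (hφ : φ ≠ 0) :
    MvPolynomial.coeff 0 (diffOp n φ φ) =
      (∑ m ∈ φ.support, (φ.coeff m) ^ 2 * ∏ i : Fin n, (Nat.factorial (m i) : ℚ)) ∧
    0 < MvPolynomial.coeff 0 (diffOp n φ φ) ∧ diffOp n φ φ ≠ 0 := by
  have hpos : 0 < coeff 0 (diffOp n φ φ) := by
    rw [coeff_zero_diffOp_self]
    refine Finset.sum_pos (fun m hm => ?_) (support_nonempty.mpr hφ)
    have := mem_support_iff.mp hm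
    positivity
  exact ⟨coeff_zero_diffOp_self n φ, hpos, fun h => by simp [h] at hpos⟩
end

section
/- Suppose D is a fixed polynomial in ℚ[x₁,…,xₙ] and I is a finite-dimensional ℚ-vector space of polynomials such that every φ ∈ I can be written φ(x) = ψ(∂x)D(x) for some polynomial ψ. Then the ℚ-linear map I → ℚ[x₁,…,xₙ] sending φ(x) ↦ φ(∂x)D(x) is injective. Consequently, the image of any basis of I is linearly independent. -/
/-!
The pairing `⟨φ, γ⟩ := constantCoeff (φ(∂x) γ)` is positive definite, because
`⟨φ, φ⟩ = ∑ₘ φₘ² ∏ᵢ mᵢ!`, and the operators `φ(∂x)` commute. So if `φ = ψ(∂x) D` and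
`φ(∂x) D = 0`, then `⟨φ, φ⟩ = constantCoeff (ψ(∂x) (φ(∂x) D)) = 0` forces `φ = 0`: the linear
map `φ ↦ φ(∂x) D` has trivial kernel on `I`.
-/

open MvPolynomial

namespace MvPolynomial

theorem iterate_pderiv_monomial {σ R : Type*} [CommSemiring R] (i : σ) (k : ℕ)
    (d : σ →₀ ℕ) (c : R) :
    (⇑(pderiv i))^[k] (monomial d c) =
      monomial (d - Finsupp.single i k) (c * (d i).descFactorial k) := by
  induction k with
  | zero => simp
  | succ k ih =>
    rw [Function.iterate_succ_apply', ih, pderiv_monomial, tsub_tsub, ← Finsupp.single_add,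
      Finsupp.tsub_apply, Finsupp.single_eq_same, Nat.descFactorial_succ, Nat.cast_mul]
    ring_nf

end MvPolynomial

section

variable {n : ℕ}

theorem foldr_iterate_pderiv_monomial (m d : Fin n →₀ ℕ) (c : ℚ) {l : List (Fin n)}
    (hl : l.Nodup) :
    l.foldr (fun i q => (⇑(pderiv i))^[m i] q) (monomial d c) =
      monomial (d - ∑ i ∈ l.toFinset, Finsupp.single i (m i))
        (c * ∏ i ∈ l.toFinset, ((d i).descFactorial (m i) : ℚ)) := by
  induction l with
  | nil => simp
  | cons i t ih =>
    rw [List.nodup_cons] at hl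
    have hit : i ∉ t.toFinset := by simpa using hl.1
    have hd : (d - ∑ j ∈ t.toFinset, Finsupp.single j (m j)) i = d i := by
      simp [Finsupp.tsub_apply, Finset.sum_apply', Finsupp.single_apply, hl.1]
    rw [List.foldr_cons, ih hl.2, iterate_pderiv_monomial, hd, tsub_tsub, List.toFinset_cons,
      Finset.sum_insert hit, Finset.prod_insert hit, add_comm (Finsupp.single i (m i))]
    ring_nf

theorem applyMono_monomial (m d : Fin n →₀ ℕ) (c : ℚ) :
    applyMono n m (monomial d c) =
      monomial (d - m) (c * ∏ i, ((d i).descFactorial (m i) : ℚ)) := by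
  rw [applyMono, foldr_iterate_pderiv_monomial m d c (List.nodup_finRange n),
    List.toFinset_finRange, Finsupp.univ_sum_single]

noncomputable def applyMonoₗ (m : Fin n →₀ ℕ) : Module.End ℚ (MvPolynomial (Fin n) ℚ) :=
  ((List.finRange n).map fun i => (pderiv i).toLinearMap ^ m i).prod

@[simp]
theorem applyMonoₗ_apply (m : Fin n →₀ ℕ) (p : MvPolynomial (Fin n) ℚ) :
    applyMonoₗ m p = applyMono n m p := by
  rw [applyMonoₗ, applyMono]
  induction List.finRange n with
  | nil => rfl
  | cons i t ih =>
    rw [List.map_cons, List.prod_cons, Module.End.mul_apply, ih, List.foldr_cons,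
      Module.End.pow_apply]
    rfl

theorem applyMonoₗ_mul (m m' : Fin n →₀ ℕ) :
    applyMonoₗ m * applyMonoₗ m' = applyMonoₗ (m + m') := by
  refine linearMap_ext fun d => LinearMap.ext fun c => ?_
  simp only [LinearMap.comp_apply, Module.End.mul_apply, applyMonoₗ_apply, applyMono_monomial,
    tsub_tsub, add_comm m', mul_assoc, ← Finset.prod_mul_distrib, ← Nat.cast_mul,
    Finsupp.tsub_apply, Finsupp.add_apply]
  congr 3 with i
  rw [← Nat.descFactorial_mul_descFactorial (Nat.le_add_left (m' i) (m i)), Nat.add_sub_cancel,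
    mul_comm]

theorem applyMonoₗ_commute (m m' : Fin n →₀ ℕ) : Commute (applyMonoₗ m) (applyMonoₗ m') := by
  rw [Commute, SemiconjBy, applyMonoₗ_mul, applyMonoₗ_mul, add_comm]

theorem constantCoeff_applyMono (m : Fin n →₀ ℕ) (φ : MvPolynomial (Fin n) ℚ) :
    constantCoeff (applyMono n m φ) = φ.coeff m * ∏ i, ((m i).factorial : ℚ) := by
  have h : lcoeff ℚ 0 ∘ₗ applyMonoₗ m = (∏ i, ((m i).factorial : ℚ)) • lcoeff ℚ m := by
    refine linearMap_ext fun d => LinearMap.ext fun c => ?_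
    simp only [LinearMap.comp_apply, LinearMap.smul_apply, applyMonoₗ_apply, applyMono_monomial,
      lcoeff_apply, coeff_monomial, smul_eq_mul]
    rcases eq_or_ne d m with rfl | hne
    · simp [Nat.descFactorial_self, mul_comm]
    by_cases hle : d ≤ m
    · obtain ⟨i, hi⟩ : ∃ i, d i < m i := by
        by_contra! h
        exact hne (le_antisymm hle (Finsupp.le_def.mpr h))
      have h0 : ∏ i, ((d i).descFactorial (m i) : ℚ) = 0 := Finset.prod_eq_zero (Finset.mem_univ i)
        (by rw [Nat.descFactorial_eq_zero_iff_lt.mpr hi, Nat.cast_zero])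
      simp [h0, hne]
    · simp [tsub_eq_zero_iff_le, hle, hne]
  simpa [constantCoeff_eq, mul_comm] using LinearMap.congr_fun h φ

noncomputable def diffOpₗ (φ : MvPolynomial (Fin n) ℚ) : Module.End ℚ (MvPolynomial (Fin n) ℚ) :=
  ∑ m ∈ φ.support, φ.coeff m • applyMonoₗ m

@[simp]
theorem diffOpₗ_apply (φ p : MvPolynomial (Fin n) ℚ) : diffOpₗ φ p = diffOp n φ p := by
  simp [diffOpₗ, diffOp]

theorem diffOp_zero_right (φ : MvPolynomial (Fin n) ℚ) : diffOp n φ 0 = 0 := by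
  simpa using (diffOpₗ φ).map_zero

theorem diffOp_diffOp_comm (φ ψ p : MvPolynomial (Fin n) ℚ) :
    diffOp n φ (diffOp n ψ p) = diffOp n ψ (diffOp n φ p) := by
  have h : Commute (diffOpₗ φ) (diffOpₗ ψ) :=
    .sum_left _ _ _ fun m _ => .sum_right _ _ _ fun m' _ =>
      ((applyMonoₗ_commute m m').smul_left _).smul_right _
  simpa using LinearMap.congr_fun h.eq p

theorem diffOp_eq_sum_of_support_subset {φ : MvPolynomial (Fin n) ℚ}
    {S : Finset (Fin n →₀ ℕ)} (hS : φ.support ⊆ S) (p : MvPolynomial (Fin n) ℚ) :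
    diffOp n φ p = ∑ m ∈ S, φ.coeff m • applyMono n m p :=
  Finset.sum_subset hS fun m _ hm => by rw [notMem_support_iff.mp hm, zero_smul]

noncomputable def diffOpOnₗ (p : MvPolynomial (Fin n) ℚ) :
    MvPolynomial (Fin n) ℚ →ₗ[ℚ] MvPolynomial (Fin n) ℚ where
  toFun φ := diffOp n φ p
  map_add' φ ψ := by
    classical
    rw [diffOp_eq_sum_of_support_subset support_add,
      diffOp_eq_sum_of_support_subset Finset.subset_union_left,
      diffOp_eq_sum_of_support_subset Finset.subset_union_right, ← Finset.sum_add_distrib]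
    simp only [coeff_add, add_smul]
  map_smul' c φ := by
    rw [diffOp_eq_sum_of_support_subset support_smul, diffOp, Finset.smul_sum]
    simp only [coeff_smul, smul_eq_mul, mul_smul, RingHom.id_apply]

@[simp]
theorem diffOpOnₗ_apply (p φ : MvPolynomial (Fin n) ℚ) : diffOpOnₗ p φ = diffOp n φ p :=
  rfl

theorem constantCoeff_diffOp_self (φ : MvPolynomial (Fin n) ℚ) :
    constantCoeff (diffOp n φ φ) =
      ∑ m ∈ φ.support, φ.coeff m ^ 2 * ∏ i, ((m i).factorial : ℚ) := by
  simp only [diffOp, map_sum, smul_eq_C_mul, map_mul, constantCoeff_C, constantCoeff_applyMono,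
    ← mul_assoc, sq]

theorem constantCoeff_diffOp_self_pos {φ : MvPolynomial (Fin n) ℚ} (hφ : φ ≠ 0) :
    0 < constantCoeff (diffOp n φ φ) := by
  have hfact (m : Fin n →₀ ℕ) : (0 : ℚ) < ∏ i, ((m i).factorial : ℚ) :=
    Finset.prod_pos fun i _ => mod_cast (m i).factorial_pos
  obtain ⟨m₀, hm₀⟩ := support_nonempty.mpr hφ
  rw [constantCoeff_diffOp_self]
  exact Finset.sum_pos' (fun m _ => mul_nonneg (sq_nonneg _) (hfact m).le)
    ⟨m₀, hm₀, mul_pos (sq_pos_of_ne_zero (mem_support_iff.mp hm₀)) (hfact m₀)⟩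

theorem eq_zero_of_diffOp_eq_zero {φ ψ D : MvPolynomial (Fin n) ℚ}
    (hφ : φ = diffOp n ψ D) (h : diffOp n φ D = 0) : φ = 0 := by
  by_contra hne
  have hself : constantCoeff (diffOp n φ φ) = 0 := by
    nth_rewrite 2 [hφ]
    rw [diffOp_diffOp_comm, h, diffOp_zero_right, map_zero]
  exact (constantCoeff_diffOp_self_pos hne).ne' hself

end

theorem stmt5_general (n : ℕ) (D : MvPolynomial (Fin n) ℚ)
    (I : Submodule ℚ (MvPolynomial (Fin n) ℚ))
    (hI : ∀ φ ∈ I, ∃ ψ : MvPolynomial (Fin n) ℚ, φ = diffOp n ψ D) :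
    Function.Injective (fun φ : I => diffOp n (φ : MvPolynomial (Fin n) ℚ) D) ∧
    ∀ (ι : Type) (b : Module.Basis ι ℚ I),
      LinearIndependent ℚ (fun j : ι => diffOp n ((b j : MvPolynomial (Fin n) ℚ)) D) := by
  have hker : LinearMap.ker (diffOpOnₗ D ∘ₗ I.subtype) = ⊥ := by
    refine LinearMap.ker_eq_bot'.mpr fun φ hφ => Submodule.coe_eq_zero.mp ?_
    obtain ⟨ψ, hψ⟩ := hI φ φ.2
    exact eq_zero_of_diffOp_eq_zero hψ (by simpa using hφ)
  refine ⟨LinearMap.ker_eq_bot.mp hker, fun ι b => ?_⟩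
  simpa [Function.comp_def] using b.linearIndependent.map' _ hker

/-- If every `φ` in the finite-dimensional subspace `I` has the form `ψ(∂x) D`, then
`φ ↦ φ(∂x) D` is injective on `I`, and the image of any basis of `I` is linearly
independent. -/
theorem stmt5 (n : ℕ) (D : MvPolynomial (Fin n) ℚ)
    (I : Submodule ℚ (MvPolynomial (Fin n) ℚ)) (hfd : FiniteDimensional ℚ I)
    (hI : ∀ φ ∈ I, ∃ ψ : MvPolynomial (Fin n) ℚ, φ = diffOp n ψ D) :
    Function.Injective (fun φ : I => diffOp n (φ : MvPolynomial (Fin n) ℚ) D) ∧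
    ∀ (ι : Type) (b : Module.Basis ι ℚ I),
      LinearIndependent ℚ (fun j : ι => diffOp n ((b j : MvPolynomial (Fin n) ℚ)) D) :=
  stmt5_general n D I hI
end
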